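/- Let k ≥ 1 and let Υ ⊆ F_{2,k}. Then the following identity of formal power series in t over ℚ holds: (Σ_{n≥1} Alt_{2n−1}^Υ t^{2n−1}/(k(2n−1))!) · (1 + Σ_{n≥1} (−1)^n t^{2n} full_{2n}^Υ/(2kn)!) = Σ_{n≥1} (−1)^{n−1} t^{2n−1} full_{2n−1}^Υ/(k(2n−1))!. -/

import Mathlib

/-!
Multiplying the coefficient of `t ^ m` by `(k m)!`, the identity says that for odd `m`
`∑ⱼ (-1)ʲ C(k m, 2 k j) full_{2j} Alt_{m-2j} = (-1)^((m-1)/2) full_m` (with `full_0 = 1`),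
the even coefficients vanishing on both sides. For even `b`, `C(k m, k b) full_b Alt_{m-b}`
counts the fillings of the `k × m` rectangle that have matches at all positions before `b`
and, after `b`, matches exactly at the odd positions: choose the `k b` values in the first `b`
columns and standardize the two blocks of columns separately. Splitting these fillings
according to whether there is a match at `b` itself makes the sum telescope down to the
fillings with matches everywhere.
-/

/-- `F` is a filling of the `k × n` rectangle (row `i`, `1 ≤ i ≤ k`, counted from the
bottom; column `j`, `1 ≤ j ≤ n`) with the integers `1, …, kn`, each used exactly once,
whose entries strictly increase up each column.  Cells outside the rectangle carry `0`. -/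
def IsFilling (n k : ℕ) (F : ℕ → ℕ → ℕ) : Prop :=
  (∀ i j, F i j ≠ 0 → 1 ≤ i ∧ i ≤ k ∧ 1 ≤ j ∧ j ≤ n) ∧
  Set.BijOn (fun p : ℕ × ℕ => F p.1 p.2) (Set.Icc 1 k ×ˢ Set.Icc 1 n) (Set.Icc 1 (k * n)) ∧
  ∀ i j, 1 ≤ i → i < k → 1 ≤ j → j ≤ n → F i j < F (i + 1) j

/-- The entries of `F` in columns `i, …, i + j - 1` are in the same relative order as the
`k × j` pattern `P`; i.e. `F` has a `P`-match starting at position `i`. -/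
def MatchAt (j k : ℕ) (P F : ℕ → ℕ → ℕ) (i : ℕ) : Prop :=
  ∀ a b c d, 1 ≤ a → a ≤ k → 1 ≤ b → b ≤ j → 1 ≤ c → c ≤ k → 1 ≤ d → d ≤ j →
    (F a (i - 1 + b) < F c (i - 1 + d) ↔ P a b < P c d)

/-- `full_n^Υ`: the number of fillings `F ∈ F_{n,k}` having `Υ`-matches starting at
every position `1, …, n-1` (for two-column patterns `Υ ⊆ F_{2,k}`). -/
noncomputable def fullCount (n k : ℕ) (U : Set (ℕ → ℕ → ℕ)) : ℕ :=
  Nat.card {F : ℕ → ℕ → ℕ // IsFilling n k F ∧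
    ∀ i, 1 ≤ i → i ≤ n - 1 → ∃ P ∈ U, MatchAt 2 k P F i}

/-- `Alt_n^Υ`: the number of `Υ`-alternating fillings `F ∈ F_{n,k}`, i.e. those with
`Υ`-matches starting at every odd position `i ≤ n-1` and at no even position
`1 ≤ i ≤ n-1`. -/
noncomputable def altCount (n k : ℕ) (U : Set (ℕ → ℕ → ℕ)) : ℕ :=
  Nat.card {F : ℕ → ℕ → ℕ // IsFilling n k F ∧
    (∀ i, Odd i → i ≤ n - 1 → ∃ P ∈ U, MatchAt 2 k P F i) ∧
    (∀ i, Even i → 1 ≤ i → i ≤ n - 1 → ¬ ∃ P ∈ U, MatchAt 2 k P F i)}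

open Finset

namespace PowerSeries

theorem coeff_mk_odd_mul_mk_even {R : Type*} [CommSemiring R] (f g : ℕ → R) (n : ℕ) :
    coeff n (mk (fun i => if Odd i then f i else 0) * mk fun j => if Even j then g j else 0) =
      if Odd n then ∑ l ∈ range (n / 2 + 1), f (n - 2 * l) * g (2 * l) else 0 := by
  simp only [coeff_mul, coeff_mk]
  split_ifs with hn
  · have hsub : (range (n / 2 + 1)).image (fun l => (n - 2 * l, 2 * l)) ⊆ antidiagonal n := by
      intro p hp
      obtain ⟨l, hl, rfl⟩ := mem_image.mp hp
      rw [HasAntidiagonal.mem_antidiagonal]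
      simp at hl
      omega
    rw [← sum_subset hsub, sum_image]
    · refine sum_congr rfl fun l hl => ?_
      simp at hl
      rw [if_pos (by rcases hn with ⟨r, rfl⟩; exact ⟨r - l, by omega⟩), if_pos (even_two_mul l)]
    · intro l _ l' _ h
      simp only [Prod.mk.injEq] at h
      omega
    · rintro ⟨i, j⟩ hij hnot
      rw [HasAntidiagonal.mem_antidiagonal] at hij
      have hj : ¬ Even j := by
        rintro ⟨l, rfl⟩
        refine hnot (mem_image.mpr ⟨l, ?_, ?_⟩)
        · rw [mem_range]
          omega
        · rw [Prod.mk.injEq]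
          omega
      simp [hj]
  · refine sum_eq_zero fun ⟨i, j⟩ hij => ?_
    rw [HasAntidiagonal.mem_antidiagonal] at hij
    by_cases hj : Even j
    · have hi : ¬ Odd i := by
        rw [Nat.not_odd_iff_even, Nat.even_iff] at hn ⊢
        rw [Nat.even_iff] at hj
        omega
      simp [hi]
    · simp [hj]

end PowerSeries

namespace Fillings

section Rank

def rank (s : Finset ℕ) (x : ℕ) : ℕ := #{y ∈ s | y ≤ x}

noncomputable def unrank (s : Finset ℕ) : ℕ → ℕ := Function.invFunOn (rank s) s

variable (s : Finset ℕ)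

lemma rank_strictMonoOn : StrictMonoOn (rank s) s := by
  intro x hx y hy hxy
  refine card_lt_card ⟨fun z hz => ?_, fun h => ?_⟩
  · simp only [mem_filter] at hz ⊢
    exact ⟨hz.1, hz.2.trans hxy.le⟩
  · have := (mem_filter.mp (h (mem_filter.mpr ⟨hy, le_rfl⟩))).2
    omega

lemma rank_bijOn : Set.BijOn (rank s) s (Set.Icc 1 #s) := by
  have hmaps : Set.MapsTo (rank s) s (Set.Icc 1 #s) := fun x hx =>
    ⟨card_pos.mpr ⟨x, mem_filter.mpr ⟨hx, le_rfl⟩⟩, card_filter_le _ _⟩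
  have himage : s.image (rank s) = Icc 1 #s := by
    refine eq_of_subset_of_card_le (fun r hr => ?_) ?_
    · obtain ⟨x, hx, rfl⟩ := mem_image.mp hr
      exact mem_Icc.mpr (hmaps hx)
    · rw [card_image_of_injOn (rank_strictMonoOn s).injOn, Nat.card_Icc, Nat.add_sub_cancel]
  have := (rank_strictMonoOn s).injOn.bijOn_image
  rwa [← coe_image, himage, coe_Icc] at this

lemma unrank_invOn : Set.InvOn (unrank s) (rank s) s (Set.Icc 1 #s) :=
  (rank_bijOn s).invOn_invFunOn

lemma unrank_bijOn : Set.BijOn (unrank s) (Set.Icc 1 #s) s :=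
  (rank_bijOn s).symm (unrank_invOn s).symm

lemma unrank_strictMonoOn : StrictMonoOn (unrank s) (Set.Icc 1 #s) := by
  intro x hx y hy hxy
  rwa [← (rank_strictMonoOn s).lt_iff_lt ((unrank_bijOn s).mapsTo hx)
    ((unrank_bijOn s).mapsTo hy), (unrank_invOn s).2 hx, (unrank_invOn s).2 hy]

end Rank

section Box

abbrev box (k n : ℕ) : Set (ℕ × ℕ) := Set.Icc 1 k ×ˢ Set.Icc 1 n

def restrictBox (k n : ℕ) (F : ℕ → ℕ → ℕ) : ℕ → ℕ → ℕ := fun i j =>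
  if (i, j) ∈ box k n then F i j else 0

variable {k n : ℕ} {F F' : ℕ → ℕ → ℕ}

lemma restrictBox_of_mem {i j : ℕ} (h : (i, j) ∈ box k n) : restrictBox k n F i j = F i j :=
  if_pos h

lemma restrictBox_congr (h : Set.EqOn (Function.uncurry F) (Function.uncurry F') (box k n)) :
    restrictBox k n F = restrictBox k n F' := by
  funext i j
  unfold restrictBox
  split_ifs with hij
  exacts [h hij, rfl]

lemma _root_.IsFilling.bijOn (hF : IsFilling n k F) :
    Set.BijOn (Function.uncurry F) (box k n) (Set.Icc 1 (k * n)) :=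
  hF.2.1

lemma _root_.IsFilling.eq_zero (hF : IsFilling n k F) {i j : ℕ} (h : (i, j) ∉ box k n) :
    F i j = 0 := by
  by_contra h0
  obtain ⟨hi, hi', hj, hj'⟩ := hF.1 i j h0
  exact h ⟨⟨hi, hi'⟩, hj, hj'⟩

lemma _root_.IsFilling.restrictBox_eq (hF : IsFilling n k F) : restrictBox k n F = F := by
  funext i j
  unfold restrictBox
  split_ifs with hij
  exacts [rfl, (hF.eq_zero hij).symm]

lemma _root_.IsFilling.le_mul (hF : IsFilling n k F) (i j : ℕ) : F i j ≤ k * n := by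
  by_cases hij : (i, j) ∈ box k n
  · exact (hF.bijOn.mapsTo hij).2
  · simp [hF.eq_zero hij]

lemma isFilling_restrictBox (hbij : Set.BijOn (Function.uncurry F) (box k n) (Set.Icc 1 (k * n)))
    (hcol : ∀ i j, 1 ≤ i → i < k → 1 ≤ j → j ≤ n → F i j < F (i + 1) j) :
    IsFilling n k (restrictBox k n F) := by
  refine ⟨fun i j h => ?_, ?_, fun i j hi hik hj hjn => ?_⟩
  · by_contra hij
    exact h (if_neg fun ⟨⟨hi, hi'⟩, hj, hj'⟩ => hij ⟨hi, hi', hj, hj'⟩)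
  · exact hbij.congr fun p hp => (restrictBox_of_mem hp).symm
  · rw [restrictBox_of_mem ⟨⟨hi, hik.le⟩, hj, hjn⟩, restrictBox_of_mem ⟨⟨by omega, hik⟩, hj, hjn⟩]
    exact hcol i j hi hik hj hjn

lemma isFilling_zero_iff : IsFilling 0 k F ↔ F = 0 := by
  constructor
  · intro hF
    funext i j
    exact hF.eq_zero fun h => by simp at h
  · rintro rfl
    refine ⟨fun i j h => absurd rfl h, ?_, fun i j _ _ hj hj' => by omega⟩
    simp

lemma finite_setOf_isFilling (n k : ℕ) : {F | IsFilling n k F}.Finite := by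
  refine Set.finite_coe_iff.mp (Finite.of_injective
    (fun (F : {F // IsFilling n k F}) (q : Fin (k + 1) × Fin (n + 1)) =>
      (⟨F.1 q.1 q.2, Nat.lt_succ_of_le (F.2.le_mul _ _)⟩ : Fin (k * n + 1))) ?_)
  rintro ⟨F, hF⟩ ⟨F', hF'⟩ h
  rw [Subtype.mk.injEq, ← hF.restrictBox_eq, ← hF'.restrictBox_eq]
  refine restrictBox_congr fun ⟨i, j⟩ ⟨⟨_, hi⟩, _, hj⟩ => ?_
  simpa using congrArg Fin.val (congrFun h (⟨i, by omega⟩, ⟨j, by omega⟩))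

end Box

section Match

def HasMatch (k : ℕ) (U : Set (ℕ → ℕ → ℕ)) (F : ℕ → ℕ → ℕ) (i : ℕ) : Prop :=
  ∃ P ∈ U, MatchAt 2 k P F i

variable {k : ℕ} {U : Set (ℕ → ℕ → ℕ)}

/-- Whether there is a match at `i` depends only on the relative order of the entries in
columns `i` and `i + 1`, so it survives relabelling these entries by a monotone map. -/
lemma hasMatch_iff_of_strictMonoOn {F F' : ℕ → ℕ → ℕ} {i i' : ℕ} {φ : ℕ → ℕ} {S : Set ℕ}
    (hφ : StrictMonoOn φ S) (hi : 1 ≤ i) (hi' : 1 ≤ i')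
    (hS : ∀ a t, 1 ≤ a → a ≤ k → t ≤ 1 → F a (i + t) ∈ S)
    (hF' : ∀ a t, 1 ≤ a → a ≤ k → t ≤ 1 → F' a (i' + t) = φ (F a (i + t))) :
    HasMatch k U F' i' ↔ HasMatch k U F i := by
  have key : ∀ a b c d, 1 ≤ a → a ≤ k → 1 ≤ b → b ≤ 2 → 1 ≤ c → c ≤ k → 1 ≤ d → d ≤ 2 →
      (F' a (i' - 1 + b) < F' c (i' - 1 + d) ↔ F a (i - 1 + b) < F c (i - 1 + d)) := by
    intro a b c d ha ha' hb hb' hc hc' hd hd'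
    rw [show i' - 1 + b = i' + (b - 1) by omega, show i' - 1 + d = i' + (d - 1) by omega,
      show i - 1 + b = i + (b - 1) by omega, show i - 1 + d = i + (d - 1) by omega,
      hF' a _ ha ha' (by omega), hF' c _ hc hc' (by omega)]
    exact hφ.lt_iff_lt (hS a _ ha ha' (by omega)) (hS c _ hc hc' (by omega))
  refine exists_congr fun P => and_congr_right fun _ => ?_
  constructor <;> intro h a b c d ha ha' hb hb' hc hc' hd hd'
  · rw [← key a b c d ha ha' hb hb' hc hc' hd hd']
    exact h a b c d ha ha' hb hb' hc hc' hd hd'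
  · rw [key a b c d ha ha' hb hb' hc hc' hd hd']
    exact h a b c d ha ha' hb hb' hc hc' hd hd'

end Match

section Patterns

variable (k : ℕ) (U : Set (ℕ → ℕ → ℕ))

def IsFull (n : ℕ) (F : ℕ → ℕ → ℕ) : Prop :=
  ∀ i, 1 ≤ i → i ≤ n - 1 → HasMatch k U F i

def IsAlternating (n : ℕ) (F : ℕ → ℕ → ℕ) : Prop :=
  ∀ i, 1 ≤ i → i ≤ n - 1 → (HasMatch k U F i ↔ Odd i)

def FullUpToAltAfter (m b : ℕ) (F : ℕ → ℕ → ℕ) : Prop :=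
  ∀ i, 1 ≤ i → i ≤ m - 1 → (HasMatch k U F i ↔ i ≤ b ∨ Odd i)

def FullBeforeAltAfter (m b : ℕ) (F : ℕ → ℕ → ℕ) : Prop :=
  ∀ i, 1 ≤ i → i ≤ m - 1 → i ≠ b → (HasMatch k U F i ↔ i ≤ b ∨ Odd i)

variable {k U}

lemma fullBeforeAltAfter_zero_iff {m : ℕ} {F : ℕ → ℕ → ℕ} :
    FullBeforeAltAfter k U m 0 F ↔ FullUpToAltAfter k U m 0 F :=
  forall_congr' fun i => forall_congr' fun hi => imp_congr_right fun _ =>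
    ⟨fun h => h (by omega), fun h _ => h⟩

lemma fullUpToAltAfter_iff_isFull {m b : ℕ} (hb : m - 1 ≤ b) {F : ℕ → ℕ → ℕ} :
    FullUpToAltAfter k U m b F ↔ IsFull k U m F :=
  forall_congr' fun i => forall_congr' fun _ => forall_congr' fun hi => by
    rw [iff_true_right (Or.inl (by omega))]

lemma fullBeforeAltAfter_and_hasMatch_iff {m b : ℕ} (hb : 1 ≤ b) (hbm : b ≤ m - 1)
    {F : ℕ → ℕ → ℕ} :
    FullBeforeAltAfter k U m b F ∧ HasMatch k U F b ↔ FullUpToAltAfter k U m b F := by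
  refine ⟨fun ⟨hT, hb'⟩ i hi him => ?_, fun hU => ⟨fun i hi him _ => hU i hi him,
    (hU b hb hbm).2 (Or.inl le_rfl)⟩⟩
  rcases eq_or_ne i b with rfl | hib
  · exact iff_of_true hb' (Or.inl le_rfl)
  · exact hT i hi him hib

lemma fullBeforeAltAfter_and_not_hasMatch_iff {m b : ℕ} (hb : 2 ≤ b) (hbm : b ≤ m - 1)
    (hbe : Even b) {F : ℕ → ℕ → ℕ} :
    FullBeforeAltAfter k U m b F ∧ ¬ HasMatch k U F b ↔ FullUpToAltAfter k U m (b - 2) F := by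
  rw [Nat.even_iff] at hbe
  have hparity : ∀ i, i ≠ b → (i ≤ b ∨ Odd i ↔ i ≤ b - 2 ∨ Odd i) := by
    intro i hib
    rw [Nat.odd_iff]
    omega
  refine ⟨fun ⟨hT, hb'⟩ i hi him => ?_, fun hU => ⟨fun i hi him hib => ?_, fun h => ?_⟩⟩
  · rcases eq_or_ne i b with rfl | hib
    · exact iff_of_false hb' (by rw [Nat.odd_iff]; omega)
    · rw [hT i hi him hib, hparity i hib]
  · rw [hU i hi him, hparity i hib]
  · have := (hU b (by omega) hbm).1 h
    rw [Nat.odd_iff] at this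
    omega

end Patterns

section Counting

noncomputable def numFillings (n k : ℕ) (p : (ℕ → ℕ → ℕ) → Prop) : ℕ :=
  Nat.card {F // IsFilling n k F ∧ p F}

variable {n k : ℕ}

lemma numFillings_congr {p q : (ℕ → ℕ → ℕ) → Prop} (h : ∀ F, IsFilling n k F → (p F ↔ q F)) :
    numFillings n k p = numFillings n k q :=
  Nat.card_congr <| Equiv.subtypeEquivRight fun F =>
    ⟨fun ⟨hF, hp⟩ => ⟨hF, (h F hF).1 hp⟩, fun ⟨hF, hq⟩ => ⟨hF, (h F hF).2 hq⟩⟩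

lemma numFillings_eq_add (p q : (ℕ → ℕ → ℕ) → Prop) :
    numFillings n k p =
      numFillings n k (fun F => p F ∧ q F) + numFillings n k (fun F => p F ∧ ¬ q F) := by
  have := Set.ncard_inter_add_ncard_sdiff_eq_ncard {F | IsFilling n k F ∧ p F} {F | q F}
    ((finite_setOf_isFilling n k).subset fun F hF => hF.1)
  have hcard : ∀ r : (ℕ → ℕ → ℕ) → Prop,
      numFillings n k r = {F | IsFilling n k F ∧ r F}.ncard := fun _ => rfl
  rw [hcard, hcard, hcard, ← this]
  congr 2 <;> ext F <;> simp [and_assoc]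

lemma fullCount_eq (U : Set (ℕ → ℕ → ℕ)) : fullCount n k U = numFillings n k (IsFull k U n) :=
  rfl

lemma altCount_eq (U : Set (ℕ → ℕ → ℕ)) :
    altCount n k U = numFillings n k (IsAlternating k U n) := by
  refine Nat.card_congr <| Equiv.subtypeEquivRight fun F => and_congr_right fun _ => ?_
  simp only [IsAlternating, HasMatch, ← Nat.not_even_iff_odd]
  refine ⟨fun ⟨hodd, heven⟩ i hi hin => ⟨fun h he => heven i he hi hin h, fun h => ?_⟩,
    fun h => ⟨fun i hodd hin => (h i ?_ hin).2 hodd, fun i he hi hin hm => (h i hi hin).1 hm he⟩⟩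
  · exact hodd i h hin
  · rcases Nat.not_even_iff_odd.mp hodd with ⟨j, rfl⟩
    omega

lemma fullCount_zero (U : Set (ℕ → ℕ → ℕ)) : fullCount 0 k U = 1 := by
  refine Nat.card_eq_one_iff_exists.mpr ⟨⟨0, isFilling_zero_iff.mpr rfl, fun i hi h => by omega⟩,
    fun ⟨F, hF, _⟩ => ?_⟩
  simp [isFilling_zero_iff.mp hF]

end Counting

section Decomposition

variable (k m b : ℕ)

def leftValues (F : ℕ → ℕ → ℕ) : Finset ℕ :=
  (Icc 1 k ×ˢ Icc 1 b).image (Function.uncurry F)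

noncomputable def leftStd (F : ℕ → ℕ → ℕ) : ℕ → ℕ → ℕ :=
  restrictBox k b fun i j => rank (leftValues k b F) (F i j)

noncomputable def rightStd (F : ℕ → ℕ → ℕ) : ℕ → ℕ → ℕ :=
  restrictBox k (m - b) fun i j => rank (Icc 1 (k * m) \ leftValues k b F) (F i (b + j))

noncomputable def merge (s : Finset ℕ) (G H : ℕ → ℕ → ℕ) : ℕ → ℕ → ℕ :=
  restrictBox k m fun i j =>
    if j ≤ b then unrank s (G i j) else unrank (Icc 1 (k * m) \ s) (H i (j - b))

variable {k m b}

lemma coe_leftValues (F : ℕ → ℕ → ℕ) :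
    (leftValues k b F : Set ℕ) = Function.uncurry F '' box k b := by
  rw [leftValues, coe_image, coe_product, coe_Icc, coe_Icc]

lemma box_subset_box (hbm : b ≤ m) : box k b ⊆ box k m :=
  Set.prod_mono le_rfl (Set.Icc_subset_Icc le_rfl hbm)

lemma image_shift_box (hbm : b ≤ m) :
    (fun p : ℕ × ℕ => (p.1, b + p.2)) '' box k (m - b) = box k m \ box k b := by
  ext ⟨i, j⟩
  simp only [Set.mem_image, Set.mem_sdiff, Set.mem_prod, Set.mem_Icc, Prod.mk.injEq, Prod.exists]
  constructor
  · rintro ⟨i, j, ⟨hi, hj⟩, rfl, rfl⟩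
    omega
  · rintro ⟨⟨hi, hj⟩, hj'⟩
    exact ⟨i, j - b, by omega⟩

lemma bijOn_shift_box (hbm : b ≤ m) :
    Set.BijOn (fun p : ℕ × ℕ => (p.1, b + p.2)) (box k (m - b)) (box k m \ box k b) := by
  rw [← image_shift_box hbm]
  exact Set.InjOn.bijOn_image fun p _ q _ h => by
    simp only [Prod.mk.injEq, Nat.add_left_cancel_iff] at h
    exact Prod.ext h.1 h.2

lemma card_Icc_sdiff {s : Finset ℕ} (hs : s ⊆ Icc 1 (k * m)) (hcard : #s = k * b) :
    #(Icc 1 (k * m) \ s) = k * (m - b) := by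
  rw [card_sdiff_of_subset hs, Nat.card_Icc, hcard, Nat.mul_sub]
  simp

section Forward

variable {F : ℕ → ℕ → ℕ} (hF : IsFilling m k F) (hbm : b ≤ m)
include hF hbm

lemma bijOn_leftValues : Set.BijOn (Function.uncurry F) (box k b) (leftValues k b F) := by
  rw [coe_leftValues]
  exact (hF.bijOn.injOn.mono (box_subset_box hbm)).bijOn_image

lemma leftValues_subset : leftValues k b F ⊆ Icc 1 (k * m) := by
  rw [← coe_subset, coe_leftValues, coe_Icc, ← hF.bijOn.image_eq]
  exact Set.image_mono (box_subset_box hbm)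

lemma card_leftValues : #(leftValues k b F) = k * b := by
  rw [leftValues, card_image_of_injOn, card_product, Nat.card_Icc, Nat.card_Icc]
  · simp
  · simpa using (bijOn_leftValues hF hbm).injOn

lemma bijOn_rightValues : Set.BijOn (fun p : ℕ × ℕ => F p.1 (b + p.2)) (box k (m - b))
    (Icc 1 (k * m) \ leftValues k b F : Finset ℕ) := by
  have hinj := hF.bijOn.injOn
  have h := (hinj.mono (Set.sdiff_subset (t := box k b))).bijOn_image
  rw [hinj.image_sdiff_subset (box_subset_box hbm), hF.bijOn.image_eq, ← coe_leftValues,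
    ← coe_Icc, ← coe_sdiff] at h
  exact h.comp (bijOn_shift_box hbm)

lemma isFilling_leftStd : IsFilling b k (leftStd k b F) := by
  have hbij := (rank_bijOn (leftValues k b F)).comp (bijOn_leftValues hF hbm)
  rw [card_leftValues hF hbm] at hbij
  refine isFilling_restrictBox hbij fun i j hi hik hj hjb => ?_
  have hmaps := (bijOn_leftValues hF hbm).mapsTo
  refine rank_strictMonoOn _ (hmaps (show (i, j) ∈ box k b from ⟨⟨hi, hik.le⟩, hj, hjb⟩))
    (hmaps (show (i + 1, j) ∈ box k b from ⟨⟨by omega, hik⟩, hj, hjb⟩)) ?_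
  exact hF.2.2 i j hi hik hj (by omega)

lemma isFilling_rightStd : IsFilling (m - b) k (rightStd k m b F) := by
  have hbij := (rank_bijOn _).comp (bijOn_rightValues hF hbm)
  rw [card_Icc_sdiff (leftValues_subset hF hbm) (card_leftValues hF hbm)] at hbij
  refine isFilling_restrictBox hbij fun i j hi hik hj hjb => ?_
  have hmaps := (bijOn_rightValues hF hbm).mapsTo
  refine rank_strictMonoOn _ (hmaps (show (i, j) ∈ box k (m - b) from ⟨⟨hi, hik.le⟩, hj, hjb⟩))
    (hmaps (show (i + 1, j) ∈ box k (m - b) from ⟨⟨by omega, hik⟩, hj, hjb⟩)) ?_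
  exact hF.2.2 i (b + j) hi hik (by omega) (by omega)

variable {U : Set (ℕ → ℕ → ℕ)}

lemma hasMatch_leftStd_iff {i : ℕ} (hi : 1 ≤ i) (hib : i + 1 ≤ b) :
    HasMatch k U (leftStd k b F) i ↔ HasMatch k U F i :=
  hasMatch_iff_of_strictMonoOn (rank_strictMonoOn _) hi hi
    (fun a t ha hak ht => (bijOn_leftValues hF hbm).mapsTo
      (show (a, i + t) ∈ box k b from ⟨⟨ha, hak⟩, by omega, by omega⟩))
    (fun a t ha hak ht => restrictBox_of_mem
      (show (a, i + t) ∈ box k b from ⟨⟨ha, hak⟩, by omega, by omega⟩))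

lemma hasMatch_rightStd_iff {i : ℕ} (hi : 1 ≤ i) (him : b + i + 1 ≤ m) :
    HasMatch k U (rightStd k m b F) i ↔ HasMatch k U F (b + i) :=
  hasMatch_iff_of_strictMonoOn (rank_strictMonoOn _) (by omega) hi
    (fun a t ha hak ht => by
      simpa only [add_assoc] using
        (bijOn_rightValues hF hbm).mapsTo (show (a, i + t) ∈ box k (m - b) from
          ⟨⟨ha, hak⟩, by omega, by omega⟩))
    (fun a t ha hak ht => by
      rw [rightStd, restrictBox_of_mem
        (show (a, i + t) ∈ box k (m - b) from ⟨⟨ha, hak⟩, by omega, by omega⟩), add_assoc])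

end Forward

section Backward

variable {s : Finset ℕ} {G H : ℕ → ℕ → ℕ}

lemma merge_of_mem_left {i j : ℕ} (hbm : b ≤ m) (hij : (i, j) ∈ box k b) :
    merge k m b s G H i j = unrank s (G i j) := by
  rw [merge, restrictBox_of_mem (box_subset_box hbm hij), if_pos hij.2.2]

lemma merge_of_mem_right {i j : ℕ} (hij : (i, j) ∈ box k (m - b)) :
    merge k m b s G H i (b + j) = unrank (Icc 1 (k * m) \ s) (H i j) := by
  obtain ⟨⟨hi, hik⟩, hj, hjm⟩ := hij
  rw [merge, restrictBox_of_mem (show (i, b + j) ∈ box k m from ⟨⟨hi, hik⟩, by omega, by omega⟩),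
    if_neg (by omega), Nat.add_sub_cancel_left]

lemma bijOn_merge_left (hcard : #s = k * b) (hbm : b ≤ m) (hG : IsFilling b k G) :
    Set.BijOn (Function.uncurry (merge k m b s G H)) (box k b) s := by
  have h := (unrank_bijOn s).comp (hcard ▸ hG.bijOn)
  exact h.congr fun p hp => (merge_of_mem_left hbm hp).symm

lemma bijOn_merge_right (hs : s ⊆ Icc 1 (k * m)) (hcard : #s = k * b) (hbm : b ≤ m)
    (hH : IsFilling (m - b) k H) :
    Set.BijOn (Function.uncurry (merge k m b s G H)) (box k m \ box k b)
      (Icc 1 (k * m) \ s : Finset ℕ) := by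
  have h := (unrank_bijOn (Icc 1 (k * m) \ s)).comp (card_Icc_sdiff hs hcard ▸ hH.bijOn)
  rw [← image_shift_box hbm, ← Set.bijOn_comp_iff (bijOn_shift_box hbm).injOn]
  exact h.congr fun p hp => (merge_of_mem_right hp).symm

lemma isFilling_merge (hs : s ⊆ Icc 1 (k * m)) (hcard : #s = k * b) (hbm : b ≤ m)
    (hG : IsFilling b k G) (hH : IsFilling (m - b) k H) : IsFilling m k (merge k m b s G H) := by
  have hleft := bijOn_merge_left (H := H) hcard hbm hG
  have hright := bijOn_merge_right (G := G) hs hcard hbm hH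
  have hunion := hleft.union hright <| (Set.injOn_union Set.disjoint_sdiff_right).mpr
      ⟨hleft.injOn, hright.injOn, fun x hx y hy hxy => by
          have h1 := hleft.mapsTo hx
          have h2 := hright.mapsTo hy
          rw [← hxy, coe_sdiff] at h2
          exact h2.2 h1⟩
  rw [Set.union_sdiff_cancel (box_subset_box hbm), ← coe_union, union_sdiff_of_subset hs,
    coe_Icc] at hunion
  refine isFilling_restrictBox (hunion.congr fun _ hp => if_pos hp)
    fun i j hi hik hj hjm => ?_
  split_ifs with hjb
  · have hmaps := hcard ▸ hG.bijOn.mapsTo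
    exact unrank_strictMonoOn s (hmaps (show (i, j) ∈ box k b from ⟨⟨hi, hik.le⟩, hj, hjb⟩))
      (hmaps (show (i + 1, j) ∈ box k b from ⟨⟨by omega, hik⟩, hj, hjb⟩))
      (hG.2.2 i j hi hik hj hjb)
  · have hmaps := card_Icc_sdiff hs hcard ▸ hH.bijOn.mapsTo
    exact unrank_strictMonoOn _
      (hmaps (show (i, j - b) ∈ box k (m - b) from ⟨⟨hi, hik.le⟩, by omega, by omega⟩))
      (hmaps (show (i + 1, j - b) ∈ box k (m - b) from ⟨⟨by omega, hik⟩, by omega, by omega⟩))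
      (hH.2.2 i (j - b) hi hik (by omega) (by omega))

variable {U : Set (ℕ → ℕ → ℕ)}

lemma hasMatch_merge_left_iff (hcard : #s = k * b) (hbm : b ≤ m) (hG : IsFilling b k G) {i : ℕ}
    (hi : 1 ≤ i) (hib : i + 1 ≤ b) :
    HasMatch k U (merge k m b s G H) i ↔ HasMatch k U G i := by
  have hmem : ∀ a t, 1 ≤ a → a ≤ k → t ≤ 1 → (a, i + t) ∈ box k b :=
    fun a t ha hak ht => ⟨⟨ha, hak⟩, by omega, by omega⟩
  exact hasMatch_iff_of_strictMonoOn (unrank_strictMonoOn s) hi hi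
    (fun a t ha hak ht => hcard ▸ hG.bijOn.mapsTo (hmem a t ha hak ht))
    (fun a t ha hak ht => merge_of_mem_left hbm (hmem a t ha hak ht))

lemma hasMatch_merge_right_iff (hs : s ⊆ Icc 1 (k * m)) (hcard : #s = k * b)
    (hH : IsFilling (m - b) k H) {i : ℕ} (hi : 1 ≤ i) (him : b + i + 1 ≤ m) :
    HasMatch k U (merge k m b s G H) (b + i) ↔ HasMatch k U H i := by
  have hmem : ∀ a t, 1 ≤ a → a ≤ k → t ≤ 1 → (a, i + t) ∈ box k (m - b) :=
    fun a t ha hak ht => ⟨⟨ha, hak⟩, by omega, by omega⟩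
  exact hasMatch_iff_of_strictMonoOn (unrank_strictMonoOn _) hi (by omega)
    (fun a t ha hak ht => card_Icc_sdiff hs hcard ▸ hH.bijOn.mapsTo (hmem a t ha hak ht))
    (fun a t ha hak ht => by rw [add_assoc, merge_of_mem_right (hmem a t ha hak ht)])

end Backward

section RoundTrip

lemma merge_leftStd_rightStd {F : ℕ → ℕ → ℕ} (hF : IsFilling m k F) (hbm : b ≤ m) :
    merge k m b (leftValues k b F) (leftStd k b F) (rightStd k m b F) = F := by
  refine (restrictBox_congr fun ⟨i, j⟩ ⟨⟨hi, hik⟩, hj, hjm⟩ => ?_).trans hF.restrictBox_eq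
  dsimp only [Function.uncurry_apply_pair]
  split_ifs with hjb
  · have hmem : (i, j) ∈ box k b := ⟨⟨hi, hik⟩, hj, hjb⟩
    rw [leftStd, restrictBox_of_mem hmem]
    exact (unrank_invOn _).1 ((bijOn_leftValues hF hbm).mapsTo hmem)
  · have hmem : (i, j - b) ∈ box k (m - b) := ⟨⟨hi, hik⟩, by omega, by omega⟩
    have hval := (bijOn_rightValues hF hbm).mapsTo hmem
    dsimp only at hval
    rw [Nat.add_sub_cancel' (by omega)] at hval
    rw [rightStd, restrictBox_of_mem hmem, Nat.add_sub_cancel' (by omega)]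
    exact (unrank_invOn _).1 hval

variable {s : Finset ℕ} {G H : ℕ → ℕ → ℕ}

lemma leftValues_merge (hcard : #s = k * b) (hbm : b ≤ m) (hG : IsFilling b k G) :
    leftValues k b (merge k m b s G H) = s := by
  rw [← coe_inj, coe_leftValues, (bijOn_merge_left hcard hbm hG).image_eq]

lemma leftStd_merge (hcard : #s = k * b) (hbm : b ≤ m) (hG : IsFilling b k G) :
    leftStd k b (merge k m b s G H) = G := by
  rw [leftStd, leftValues_merge hcard hbm hG]
  refine (restrictBox_congr fun ⟨i, j⟩ hmem => ?_).trans hG.restrictBox_eq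
  dsimp only [Function.uncurry_apply_pair]
  rw [merge_of_mem_left hbm hmem]
  exact (unrank_invOn s).2 (hcard ▸ hG.bijOn.mapsTo hmem)

lemma rightStd_merge (hs : s ⊆ Icc 1 (k * m)) (hcard : #s = k * b) (hbm : b ≤ m)
    (hG : IsFilling b k G) (hH : IsFilling (m - b) k H) :
    rightStd k m b (merge k m b s G H) = H := by
  rw [rightStd, leftValues_merge hcard hbm hG]
  refine (restrictBox_congr fun ⟨i, j⟩ hmem => ?_).trans hH.restrictBox_eq
  dsimp only [Function.uncurry_apply_pair]
  rw [merge_of_mem_right hmem]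
  exact (unrank_invOn _).2 (card_Icc_sdiff hs hcard ▸ hH.bijOn.mapsTo hmem)

end RoundTrip

section Count

variable {U : Set (ℕ → ℕ → ℕ)}

lemma fullBeforeAltAfter_iff {F G H : ℕ → ℕ → ℕ} (hbe : Even b) (hbm : b ≤ m)
    (hG : ∀ i, 1 ≤ i → i + 1 ≤ b → (HasMatch k U F i ↔ HasMatch k U G i))
    (hH : ∀ i, 1 ≤ i → b + i + 1 ≤ m → (HasMatch k U F (b + i) ↔ HasMatch k U H i)) :
    FullBeforeAltAfter k U m b F ↔ IsFull k U b G ∧ IsAlternating k U (m - b) H := by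
  rw [Nat.even_iff] at hbe
  constructor
  · intro hT
    refine ⟨fun i hi hib => (hG i hi (by omega)).1 ((hT i hi (by omega) (by omega)).2
      (Or.inl (by omega))), fun i hi him => ?_⟩
    rw [← hH i hi (by omega), hT (b + i) (by omega) (by omega) (by omega), Nat.odd_iff,
      Nat.odd_iff]
    omega
  · rintro ⟨hfull, halt⟩ i hi him hib
    rcases Nat.lt_or_gt_of_ne hib with hib | hib
    · exact iff_of_true ((hG i hi (by omega)).2 (hfull i hi (by omega))) (Or.inl hib.le)
    · obtain ⟨j, rfl⟩ := Nat.exists_eq_add_of_lt hib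
      rw [add_assoc, hH (j + 1) (by omega) (by omega), halt (j + 1) (by omega) (by omega),
        Nat.odd_iff, Nat.odd_iff]
      omega

noncomputable def splitEquiv (hbe : Even b) (hbm : b ≤ m) :
    {F // IsFilling m k F ∧ FullBeforeAltAfter k U m b F} ≃
      (powersetCard (k * b) (Icc 1 (k * m))) × {G // IsFilling b k G ∧ IsFull k U b G} ×
        {H // IsFilling (m - b) k H ∧ IsAlternating k U (m - b) H} where
  toFun F :=
    have hsplit := (fullBeforeAltAfter_iff hbe hbm
      (fun i hi hib => (hasMatch_leftStd_iff F.2.1 hbm hi hib).symm)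
      (fun i hi him => (hasMatch_rightStd_iff F.2.1 hbm hi him).symm)).1 F.2.2
    (⟨leftValues k b F, mem_powersetCard.mpr
        ⟨leftValues_subset F.2.1 hbm, card_leftValues F.2.1 hbm⟩⟩,
      ⟨leftStd k b F, isFilling_leftStd F.2.1 hbm, hsplit.1⟩,
      ⟨rightStd k m b F, isFilling_rightStd F.2.1 hbm, hsplit.2⟩)
  invFun x :=
    have hs := mem_powersetCard.mp x.1.2
    ⟨merge k m b x.1 x.2.1 x.2.2, isFilling_merge hs.1 hs.2 hbm x.2.1.2.1 x.2.2.2.1,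
      (fullBeforeAltAfter_iff hbe hbm
        (fun i hi hib => hasMatch_merge_left_iff hs.2 hbm x.2.1.2.1 hi hib)
        (fun i hi him => hasMatch_merge_right_iff hs.1 hs.2 x.2.2.2.1 hi him)).2
        ⟨x.2.1.2.2, x.2.2.2.2⟩⟩
  left_inv F := Subtype.ext (merge_leftStd_rightStd F.2.1 hbm)
  right_inv x := by
    have hs := mem_powersetCard.mp x.1.2
    refine Prod.ext (Subtype.ext ?_) (Prod.ext (Subtype.ext ?_) (Subtype.ext ?_))
    · exact leftValues_merge hs.2 hbm x.2.1.2.1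
    · exact leftStd_merge hs.2 hbm x.2.1.2.1
    · exact rightStd_merge hs.1 hs.2 hbm x.2.1.2.1 x.2.2.2.1

lemma numFillings_fullBeforeAltAfter (hbe : Even b) (hbm : b ≤ m) :
    numFillings m k (FullBeforeAltAfter k U m b) =
      (k * m).choose (k * b) * fullCount b k U * altCount (m - b) k U := by
  rw [numFillings, Nat.card_congr (splitEquiv hbe hbm), Nat.card_prod, Nat.card_prod,
    Nat.card_eq_finsetCard, card_powersetCard, Nat.card_Icc, Nat.add_sub_cancel, fullCount_eq,
    altCount_eq, mul_assoc]
  rfl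

end Count

end Decomposition

section Telescoping

variable {k m : ℕ} {U : Set (ℕ → ℕ → ℕ)}

lemma sum_neg_one_pow_numFillings_fullBeforeAltAfter {r : ℕ} (hr : 2 * r ≤ m - 1) :
    ∑ j ∈ range (r + 1), (-1 : ℤ) ^ j * numFillings m k (FullBeforeAltAfter k U m (2 * j)) =
      (-1) ^ r * numFillings m k (FullUpToAltAfter k U m (2 * r)) := by
  induction r with
  | zero => simp [numFillings_congr fun F _ => fullBeforeAltAfter_zero_iff]
  | succ r ih =>
    rw [sum_range_succ, ih (by omega),
      numFillings_eq_add (FullBeforeAltAfter k U m (2 * (r + 1))) (HasMatch k U · (2 * (r + 1))),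
      numFillings_congr fun F _ => fullBeforeAltAfter_and_hasMatch_iff (by omega) hr,
      numFillings_congr fun F _ =>
        fullBeforeAltAfter_and_not_hasMatch_iff (by omega) hr (even_two_mul _),
      show 2 * (r + 1) - 2 = 2 * r by omega]
    push_cast
    ring

theorem sum_neg_one_pow_choose_mul_fullCount_mul_altCount (hm : Odd m) :
    ∑ j ∈ range (m / 2 + 1), (-1 : ℤ) ^ j * (k * m).choose (k * (2 * j)) *
        fullCount (2 * j) k U * altCount (m - 2 * j) k U =
      (-1) ^ (m / 2) * fullCount m k U := by
  obtain ⟨r, rfl⟩ := hm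
  have h := sum_neg_one_pow_numFillings_fullBeforeAltAfter (k := k) (U := U) (m := 2 * r + 1)
    (r := r) (by omega)
  rw [numFillings_congr fun F _ => fullUpToAltAfter_iff_isFull (by omega), ← fullCount_eq] at h
  rw [show (2 * r + 1) / 2 = r by omega, ← h]
  refine sum_congr rfl fun j hj => ?_
  rw [numFillings_fullBeforeAltAfter (even_two_mul j) (by simp at hj; omega)]
  push_cast
  ring

end Telescoping

lemma sum_altCount_mul_fullCount_div_factorial {k m : ℕ} {U : Set (ℕ → ℕ → ℕ)} (hm : Odd m) :
    ∑ l ∈ range (m / 2 + 1), (altCount (m - 2 * l) k U : ℚ) / (k * (m - 2 * l)).factorial *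
        ((-1) ^ (2 * l / 2) * fullCount (2 * l) k U / (k * (2 * l)).factorial) =
      (-1) ^ (m / 2) * fullCount m k U / (k * m).factorial := by
  have h : ∑ l ∈ range (m / 2 + 1), (-1 : ℚ) ^ l * (k * m).choose (k * (2 * l)) *
      fullCount (2 * l) k U * altCount (m - 2 * l) k U = (-1) ^ (m / 2) * fullCount m k U := by
    exact_mod_cast sum_neg_one_pow_choose_mul_fullCount_mul_altCount hm
  rw [← h, sum_div]
  refine sum_congr rfl fun l hl => ?_
  have hle : k * (2 * l) ≤ k * m := Nat.mul_le_mul_left k (by simp at hl; omega)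
  rw [Nat.cast_choose ℚ hle, ← Nat.mul_sub, Nat.mul_div_cancel_left l two_pos]
  field_simp

end Fillings

open Fillings

theorem stmt11_general (k : ℕ) (U : Set (ℕ → ℕ → ℕ)) :
    (PowerSeries.mk fun m => if m % 2 = 1 then
        (altCount m k U : ℚ) / ((k * m).factorial : ℚ) else 0) *
    (PowerSeries.mk fun m => if m = 0 then (1 : ℚ) else
        if m % 2 = 0 then
          (-1) ^ (m / 2) * (fullCount m k U : ℚ) / ((k * m).factorial : ℚ)
        else 0) =
    PowerSeries.mk (fun m => if m % 2 = 1 then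
        (-1) ^ ((m - 1) / 2) * (fullCount m k U : ℚ) / ((k * m).factorial : ℚ)
      else 0) := by
  have hodd : (fun m => if m % 2 = 1 then (altCount m k U : ℚ) / (k * m).factorial else 0) =
      fun m => if Odd m then (altCount m k U : ℚ) / (k * m).factorial else 0 := by
    simp only [Nat.odd_iff]
  have heven : (fun m => if m = 0 then (1 : ℚ) else if m % 2 = 0 then
        (-1) ^ (m / 2) * (fullCount m k U : ℚ) / (k * m).factorial else 0) =
      fun m => if Even m then (-1) ^ (m / 2) * (fullCount m k U : ℚ) / (k * m).factorial
        else 0 := by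
    funext m
    rcases eq_or_ne m 0 with rfl | hm
    · simp [fullCount_zero]
    · simp [hm, Nat.even_iff]
  rw [hodd, heven]
  ext m
  rw [PowerSeries.coeff_mk_odd_mul_mk_even, PowerSeries.coeff_mk]
  simp only [← Nat.odd_iff]
  split_ifs with hm
  · rw [sum_altCount_mul_fullCount_div_factorial hm, show (m - 1) / 2 = m / 2 by
      rcases hm with ⟨r, rfl⟩; omega]
  · rfl

/-- Theorem: `(Σ_{n≥1} Alt_{2n-1}^Υ t^{2n-1}/(k(2n-1))!) ·
(1 + Σ_{n≥1} (-1)^n t^{2n} full_{2n}^Υ/(2kn)!)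
  = Σ_{n≥1} (-1)^{n-1} t^{2n-1} full_{2n-1}^Υ/(k(2n-1))!` as formal power series in `t`
over `ℚ` (odd coefficients are indexed by `m = 2n - 1`, even ones by `m = 2n`). -/
theorem stmt11 (k : ℕ) (hk : 1 ≤ k) (U : Set (ℕ → ℕ → ℕ))
    (hU : ∀ P ∈ U, IsFilling 2 k P) :
    (PowerSeries.mk fun m => if m % 2 = 1 then
        (altCount m k U : ℚ) / ((k * m).factorial : ℚ) else 0) *
    (PowerSeries.mk fun m => if m = 0 then (1 : ℚ) else
        if m % 2 = 0 then
          (-1) ^ (m / 2) * (fullCount m k U : ℚ) / ((k * m).factorial : ℚ)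
        else 0) =
    PowerSeries.mk (fun m => if m % 2 = 1 then
        (-1) ^ ((m - 1) / 2) * (fullCount m k U : ℚ) / ((k * m).factorial : ℚ)
      else 0) :=
  stmt11_general k U
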